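/- arXiv:2111.05499 — 5 statements merged into one kernel-verified Lean document; each statement's English description precedes it below -/
import Mathlib

section
/- For every integer N ≥ 1, the rank of the matrix Σ_{i=1}^{N} σ_i (the sum of the N qubit PBT signal states) equals 2^{N+1} − N − 2. -/
/-!
`∑ᵢ σᵢ = P Pᵀ`, where the column of `P` indexed by an edge `(b, b + eᵢ)` of the hypercube
`{0,1}^N` is `e(b,0) + e(b + eᵢ,1)`; so the rank is that of `Pᵀ`. A vector `g` lies in the kernel
of `Pᵀ` iff `g(b,0) = -g(b + eᵢ,1)` along every edge. Transpositions of coordinates connect any two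
vectors of equal Hamming weight, so `(-1)^c g(a,c)` depends only on the level `|a| + 1 - c`, which
takes the `N + 2` values `0, …, N + 1`; conversely every function of the level arises this way.
Hence `dim ker Pᵀ = N + 2`, and rank–nullity gives `rank P = 2^(N+1) - N - 2`.
-/

open Finset

/-- The integer-scaled qubit PBT signal state `2^N σ_i`, a matrix on
`(ℂ²)^{⊗N} ⊗ ℂ²` indexed by pairs `(a, c)`. Its `((a,c),(a',c'))` entry is `1`
iff `a_i = c`, `a'_i = c'`, and `a_j = a'_j` for all `j ≠ i`, and `0` otherwise. -/
def sigmaQubit (N : ℕ) (i : Fin N) :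
    Matrix ((Fin N → Fin 2) × Fin 2) ((Fin N → Fin 2) × Fin 2) ℚ :=
  fun p q =>
    if p.1 i = p.2 ∧ q.1 i = q.2 ∧ ∀ j, j ≠ i → p.1 j = q.1 j then 1 else 0

open Function Matrix Module

theorem apply_eq_and_eq_update_iff {α β : Type*} [DecidableEq α] {a b : α → β} {i : α}
    {y z : β} : b i = z ∧ a = update b i y ↔ b = update a i z ∧ a i = y := by
  constructor
  · rintro ⟨rfl, rfl⟩
    simp
  · rintro ⟨rfl, rfl⟩
    simp

section HammingNorm

variable {α β : Type*} [Fintype α] [DecidableEq β] [Zero β]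

theorem hammingNorm_update_of_ne_zero [DecidableEq α] (x : α → β) (i : α) {y : β} (hy : y ≠ 0) :
    hammingNorm (update x i y) = hammingNorm (update x i 0) + 1 := by
  rw [hammingNorm, hammingNorm, ← card_insert_of_notMem (a := i) (by simp)]
  congr 1
  ext j
  by_cases hj : j = i <;> simp [hj, hy]

theorem exists_hammingNorm_eq [Nontrivial β] {k : ℕ} (hk : k ≤ Fintype.card α) :
    ∃ x : α → β, hammingNorm x = k := by
  classical
  obtain ⟨y, hy⟩ := exists_ne (0 : β)
  obtain ⟨t, -, ht⟩ := exists_subset_card_eq (s := (univ : Finset α)) (by simpa using hk)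
  refine ⟨fun i => if i ∈ t then y else 0, ?_⟩
  simp [hammingNorm, hy, ht]

theorem exists_eq_zero_of_hammingNorm_lt {x : α → β} (h : hammingNorm x < Fintype.card α) :
    ∃ i, x i = 0 := by
  by_contra! hx
  simp [hammingNorm, hx] at h

theorem exists_perm_comp_eq_of_hammingNorm_eq {a b : α → Fin 2}
    (h : hammingNorm a = hammingNorm b) : ∃ σ : Equiv.Perm α, b ∘ σ = a := by
  have hcard : Fintype.card {i // a i ≠ 0} = Fintype.card {i // b i ≠ 0} := by
    rwa [Fintype.card_subtype, Fintype.card_subtype]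
  have hcard' : Fintype.card {i // ¬a i ≠ 0} = Fintype.card {i // ¬b i ≠ 0} := by
    rw [Fintype.card_subtype_compl (fun i => a i ≠ 0),
      Fintype.card_subtype_compl (fun i => b i ≠ 0), hcard]
  refine ⟨Equiv.subtypeCongr (Fintype.equivOfCardEq hcard) (Fintype.equivOfCardEq hcard'),
    funext fun i => ?_⟩
  have fin_two_eq : ∀ x y : Fin 2, (x ≠ 0 ↔ y ≠ 0) → x = y := by decide
  refine fin_two_eq _ _ ?_
  by_cases hi : a i ≠ 0
  · simpa [Equiv.subtypeCongr, hi] using (Fintype.equivOfCardEq hcard ⟨i, hi⟩).2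
  · simpa [Equiv.subtypeCongr, hi] using (Fintype.equivOfCardEq hcard' ⟨i, hi⟩).2

end HammingNorm

section Permutations

variable {α γ : Type*} [DecidableEq α]

theorem apply_comp_perm_eq [Finite α] {β : Type*} {f : (α → β) → γ}
    (hf : ∀ a i j, f (a ∘ Equiv.swap i j) = f a) (a : α → β) (σ : Equiv.Perm α) :
    f (a ∘ σ) = f a := by
  induction σ using Equiv.Perm.swap_induction_on generalizing a with
  | one => rfl
  | swap_mul σ i j _ ih => rw [Equiv.Perm.coe_mul, ← comp_assoc, ih, hf]

theorem apply_comp_swap_eq_of_apply_update_eq {f : (α → Fin 2) → γ} {c : Fin 2}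
    (hf : ∀ b i j, b i = b j → f (update b i c) = f (update b j c)) (a : α → Fin 2) (i j : α) :
    f (a ∘ Equiv.swap i j) = f a := by
  by_cases hij : a i = a j
  · rw [Equiv.comp_swap_eq_update, hij, update_eq_self, ← hij, update_eq_self]
  wlog hj : a j = c generalizing i j
  · rw [Equiv.swap_comm]
    exact this j i (Ne.symm hij) (by omega)
  have hb : update a j (a i) i = update a j (a i) j := by
    rw [update_self, update_of_ne (fun h => hij (congrArg a h))]
  have := hf _ i j hb
  rwa [← hj, update_idem, update_eq_self, ← Equiv.comp_swap_eq_update] at this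

theorem apply_eq_of_hammingNorm_eq [Fintype α] {f : (α → Fin 2) → γ} {c : Fin 2}
    (hf : ∀ b i j, b i = b j → f (update b i c) = f (update b j c)) {a b : α → Fin 2}
    (h : hammingNorm a = hammingNorm b) : f a = f b := by
  obtain ⟨σ, rfl⟩ := exists_perm_comp_eq_of_hammingNorm_eq h
  exact apply_comp_perm_eq (apply_comp_swap_eq_of_apply_update_eq hf) b σ

end Permutations

namespace Hypercube

variable (K : Type*) [Field K] (α : Type*) [Fintype α]

def level (v : (α → Fin 2) × Fin 2) : Fin (Fintype.card α + 2) :=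
  ⟨hammingNorm v.1 + 1 - v.2, by have := hammingNorm_le_card_fintype (x := v.1); omega⟩

theorem level_surjective : Surjective (level α) := by
  intro k
  by_cases hk : (k : ℕ) ≤ Fintype.card α
  · obtain ⟨a, ha⟩ := exists_hammingNorm_eq (β := Fin 2) hk
    exact ⟨(a, 1), Fin.ext (by simp [level, ha])⟩
  · obtain ⟨a, ha⟩ := exists_hammingNorm_eq (β := Fin 2) (le_refl (Fintype.card α))
    refine ⟨(a, 0), Fin.ext ?_⟩
    simp only [level, ha, Fin.coe_ofNat_eq_mod, Nat.zero_mod, tsub_zero]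
    omega

def levelLift : (Fin (Fintype.card α + 2) → K) →ₗ[K] ((α → Fin 2) × Fin 2 → K) where
  toFun x v := (-1) ^ (v.2 : ℕ) * x (level α v)
  map_add' x y := by ext v; simp [mul_add]
  map_smul' r x := by ext v; simp [mul_left_comm]

variable {K α} in
theorem levelLift_injective : Injective (levelLift K α) := by
  intro x y h
  funext k
  obtain ⟨v, rfl⟩ := level_surjective α k
  exact mul_left_cancel₀ (by simp) (congr_fun h v)

variable [DecidableEq α]

def incidence : Matrix ((α → Fin 2) × Fin 2) (α × (α → Fin 2)) K :=
  of fun v e => if e.2 e.1 = 0 ∧ v.1 = update e.2 e.1 v.2 then 1 else 0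

variable {K α}

theorem incidence_transpose_mulVec_apply (g : (α → Fin 2) × Fin 2 → K) (i : α)
    (b : α → Fin 2) :
    ((incidence K α)ᵀ *ᵥ g) (i, b) = if b i = 0 then ∑ c, g (update b i c, c) else 0 := by
  split_ifs with hb <;>
    simp [incidence, mulVec, dotProduct, Fintype.sum_prod_type, hb, ite_and,
      sum_add_distrib]

theorem mem_ker_incidence_transpose_iff {g : (α → Fin 2) × Fin 2 → K} :
    g ∈ LinearMap.ker (incidence K α)ᵀ.mulVecLin ↔
      ∀ i b, ∑ c, g (update b i c, c) = 0 := by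
  simp only [LinearMap.mem_ker, mulVecLin_apply, funext_iff, Prod.forall,
    incidence_transpose_mulVec_apply, Pi.zero_apply]
  refine ⟨fun h i b => ?_, fun h i b => ?_⟩
  · simpa using h i (update b i 0)
  · split_ifs with hb
    · simpa [← hb] using h i b
    · rfl

section Kernel

variable {g : (α → Fin 2) × Fin 2 → K} (hg : g ∈ LinearMap.ker (incidence K α)ᵀ.mulVecLin)
include hg

theorem apply_update_eq_of_mem_ker {b : α → Fin 2} {i j : α} (hb : b i = b j) (c : Fin 2) :
    g (update b i c, c) = g (update b j c, c) := by
  have hi := mem_ker_incidence_transpose_iff.1 hg i b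
  have hj := mem_ker_incidence_transpose_iff.1 hg j b
  rw [Fin.sum_univ_two] at hi hj
  -- for `c ≠ b i` both sides equal `-g (b, b i)`, by the kernel relations at `i` and at `j`
  have hbi : update b i (b i) = b := update_eq_self i b
  have hbj : update b j (b i) = b := hb ▸ update_eq_self j b
  rcases (by omega : b i = 0 ∨ b i = 1) with h | h <;> rw [h] at hbi hbj <;>
    fin_cases c <;> simp only [Fin.zero_eta, Fin.mk_one, hbi, hbj] at hi hj ⊢ <;>
    linear_combination hi - hj

theorem apply_eq_of_mem_ker_of_hammingNorm_eq (c : Fin 2) {a b : α → Fin 2}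
    (h : hammingNorm a = hammingNorm b) : g (a, c) = g (b, c) :=
  apply_eq_of_hammingNorm_eq (f := fun a => g (a, c))
    (fun _ _ _ hb => apply_update_eq_of_mem_ker hg hb c) h

theorem apply_one_eq_neg_apply_zero_of_mem_ker {a b : α → Fin 2}
    (h : hammingNorm b = hammingNorm a + 1) : g (b, 1) = -g (a, 0) := by
  obtain ⟨i, hi⟩ := exists_eq_zero_of_hammingNorm_lt (x := a)
    (by have := hammingNorm_le_card_fintype (x := b); omega)
  have hsum := mem_ker_incidence_transpose_iff.1 hg i a
  rw [Fin.sum_univ_two, ← hi, update_eq_self, hi] at hsum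
  have hnorm : hammingNorm (update a i 1) = hammingNorm b := by
    rw [hammingNorm_update_of_ne_zero a i one_ne_zero, ← hi, update_eq_self, h]
  rw [← apply_eq_of_mem_ker_of_hammingNorm_eq hg 1 hnorm]
  linear_combination hsum

theorem signed_apply_eq_of_level_eq {v w : (α → Fin 2) × Fin 2} (h : level α v = level α w) :
    (-1) ^ (v.2 : ℕ) * g v = (-1) ^ (w.2 : ℕ) * g w := by
  obtain ⟨a, c⟩ := v
  obtain ⟨b, d⟩ := w
  simp only [level, Fin.mk.injEq] at h
  fin_cases c <;> fin_cases d <;>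
    simp only [Fin.zero_eta, Fin.mk_one, tsub_zero, add_tsub_cancel_right, Nat.add_right_cancel_iff,
      pow_zero, pow_one, one_mul, neg_mul, neg_inj] at h ⊢
  · exact apply_eq_of_mem_ker_of_hammingNorm_eq hg 0 h
  · rw [apply_one_eq_neg_apply_zero_of_mem_ker hg h.symm, neg_neg]
  · rw [apply_one_eq_neg_apply_zero_of_mem_ker hg h, neg_neg]
  · exact apply_eq_of_mem_ker_of_hammingNorm_eq hg 1 h

end Kernel

theorem range_levelLift :
    LinearMap.range (levelLift K α) = LinearMap.ker (incidence K α)ᵀ.mulVecLin := by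
  apply le_antisymm
  · rintro _ ⟨x, rfl⟩
    refine mem_ker_incidence_transpose_iff.2 fun i b => ?_
    have hlevel : level α (update b i 1, 1) = level α (update b i 0, 0) := by
      simp [level, hammingNorm_update_of_ne_zero b i one_ne_zero]
    simp [levelLift, Fin.sum_univ_two, hlevel]
  · intro g hg
    let s := surjInv (level_surjective α)
    refine ⟨fun k => (-1) ^ ((s k).2 : ℕ) * g (s k), funext fun v => ?_⟩
    have hs : level α (s (level α v)) = level α v := surjInv_eq _ _
    change (-1) ^ (v.2 : ℕ) * ((-1) ^ ((s (level α v)).2 : ℕ) * g (s (level α v))) = g v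
    rw [signed_apply_eq_of_level_eq hg hs, ← mul_assoc, ← mul_pow, neg_one_mul, neg_neg, one_pow,
      one_mul]

variable (K α)

theorem finrank_ker_incidence_transpose :
    finrank K (LinearMap.ker (incidence K α)ᵀ.mulVecLin) = Fintype.card α + 2 := by
  rw [← range_levelLift, LinearMap.finrank_range_of_inj levelLift_injective,
    finrank_fintype_fun_eq_card, Fintype.card_fin]

theorem rank_incidence :
    (incidence K α).rank = 2 ^ (Fintype.card α + 1) - Fintype.card α - 2 := by
  have h := LinearMap.finrank_range_add_finrank_ker (incidence K α)ᵀ.mulVecLin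
  rw [finrank_ker_incidence_transpose, finrank_fintype_fun_eq_card, Fintype.card_prod,
    Fintype.card_fun, Fintype.card_fin] at h
  rw [← rank_transpose, Matrix.rank, pow_succ]
  omega

end Hypercube

theorem sum_sigmaQubit_eq_incidence_mul_transpose (N : ℕ) :
    ∑ i, sigmaQubit N i = Hypercube.incidence ℚ (Fin N) * (Hypercube.incidence ℚ (Fin N))ᵀ := by
  ext p q
  simp only [Matrix.sum_apply, mul_apply, Fintype.sum_prod_type, transpose_apply,
    Hypercube.incidence, of_apply, apply_eq_and_eq_update_iff]
  refine sum_congr rfl fun i _ => ?_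
  simp only [sigmaQubit, ite_and, mul_ite, mul_one, mul_zero, sum_ite_eq', mem_univ, if_true,
    update_eq_iff, update_self, true_and]
  have hupd : (∀ j ≠ i, q.1 j = update p.1 i 0 j) ↔ ∀ j ≠ i, p.1 j = q.1 j :=
    forall₂_congr fun j hj => by rw [update_of_ne hj, eq_comm]
  simp only [hupd]
  split_ifs <;> rfl

theorem rank_sum_sigmaQubit_general (N : ℕ) :
    (∑ i : Fin N, sigmaQubit N i).rank = 2 ^ (N + 1) - N - 2 := by
  rw [sum_sigmaQubit_eq_incidence_mul_transpose, rank_self_mul_transpose,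
    Hypercube.rank_incidence, Fintype.card_fin]

/-- The rank of the sum of the `N` qubit PBT signal states equals
`2^(N+1) − N − 2`. -/
theorem rank_sum_sigmaQubit (N : ℕ) (hN : 1 ≤ N) :
    (∑ i : Fin N, sigmaQubit N i).rank = 2 ^ (N + 1) - N - 2 :=
  rank_sum_sigmaQubit_general N
end

section
/- For every integer N ≥ 1, the rational-number identity Σ_{l=0}^{⌈N/2⌉−1} (N+1)·C(N,l)·(N−2l)² / ((N+1−l)(l+1)) = 2^{N+1} − N − 2 holds, where C(N,l) denotes the binomial coefficient. -/
/-!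
With `M = N + 2` and `k = l + 1`, the summand equals `C(M, k) (M - 2k)² / M`. The full sum
`Σ_{k ≤ M} C(M, k) (M - 2k)² = M 2^M` is `2^M E[(M - 2X)²]` for `X ~ Bin(M, 1/2)`, proved
by induction on `M` through Pascal's rule. Its summand is symmetric under `k ↦ M - k` and
vanishes at `k = M / 2`, so the range `k ≤ ⌈N/2⌉` carries exactly half of it; removing the
`k = 0` term `M²` and dividing by `M` gives `2^(M-1) - M`.
-/

open Finset

theorem sum_range_succ_eq_two_nsmul_sum_range_half {β : Type*} [AddCommMonoid β] (f : ℕ → β)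
    (n : ℕ) (hsymm : ∀ k ≤ n, f (n - k) = f k) (hmid : ∀ k, 2 * k = n → f k = 0) :
    ∑ k ∈ range (n + 1), f k = 2 • ∑ k ∈ range ((n + 1) / 2), f k := by
  have reflect (m a : ℕ) (ha : a + m = n + 1) :
      ∑ x ∈ range m, f (a + x) = ∑ x ∈ range m, f x := by
    rw [← sum_range_reflect]
    refine sum_congr rfl fun x hx => ?_
    rw [← hsymm x (by grind)]
    congr 1
    grind
  obtain ⟨m, rfl | rfl⟩ := Nat.even_or_odd' n
  · rw [show 2 * m + 1 = (m + 1) + m by omega, sum_range_add, sum_range_succ, hmid m rfl,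
      add_zero, reflect m (m + 1) (by omega), show (m + 1 + m) / 2 = m by omega, two_nsmul]
  · rw [show 2 * m + 1 + 1 = (m + 1) + (m + 1) by omega, sum_range_add,
      reflect (m + 1) (m + 1) (by omega), show (m + 1 + (m + 1)) / 2 = m + 1 by omega, two_nsmul]

theorem sum_range_choose_mul_sub_two_mul_sq {R : Type*} [CommRing R] (n : ℕ) :
    ∑ i ∈ range (n + 1), (n.choose i : R) * ((n : R) - 2 * i) ^ 2 = (n : R) * 2 ^ n := by
  induction n with
  | zero => simp
  | succ n ih =>
    -- Pascal's rule splits each term into `d ± 1` with `d = n - 2i`,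
    -- and `(d + 1)² + (d - 1)² = 2d² + 2`.
    have pascal := sum_choose_succ_mul (fun i j : ℕ => ((j : R) - i) ^ 2) n
    calc ∑ i ∈ range (n + 2), ((n + 1).choose i : R) * (((n + 1 : ℕ) : R) - 2 * i) ^ 2
        = ∑ i ∈ range (n + 2), ((n + 1).choose i : R) * (((n + 1 - i : ℕ) : R) - i) ^ 2 := by
          refine sum_congr rfl fun i hi => ?_
          rw [Nat.cast_sub (by grind)]
          ring
      _ = ∑ i ∈ range (n + 1),
            (2 * ((n.choose i : R) * ((n : R) - 2 * i) ^ 2) + 2 * n.choose i) := by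
          rw [pascal, ← sum_add_distrib]
          refine sum_congr rfl fun i hi => ?_
          rw [Nat.cast_sub (by grind), Nat.cast_sub (by grind)]
          push_cast
          ring
      _ = (n + 1 : ℕ) * 2 ^ (n + 1) := by
          rw [sum_add_distrib, ← mul_sum, ← mul_sum, ih, ← Nat.cast_sum, Nat.sum_range_choose]
          push_cast
          ring

theorem add_one_mul_choose_div_eq_choose_add_two_div {K : Type*} [Field K] [CharZero K]
    {n k : ℕ} (hk : k ≤ n) :
    ((n : K) + 1) * n.choose k / (((n : K) + 1 - k) * ((k : K) + 1))
      = (n + 2).choose (k + 1) / ((n : K) + 2) := by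
  have hsub : ((n + 1 - k : ℕ) : K) = n + 1 - k := by
    rw [Nat.cast_sub (by omega)]
    push_cast
    ring
  have h1 : ((n : K) + 1) * n.choose k = (n + 1).choose (k + 1) * ((k : K) + 1) := by
    exact_mod_cast Nat.add_one_mul_choose_eq n k
  have h2 : ((n + 1).choose (k + 1) : K) * ((n : K) + 2)
      = (n + 2).choose (k + 1) * ((n : K) + 1 - k) := by
    rw [← hsub, show n + 1 - k = n + 1 + 1 - (k + 1) by omega]
    exact_mod_cast Nat.choose_mul_succ_eq (n + 1) (k + 1)
  have hsub_ne : (n : K) + 1 - k ≠ 0 := by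
    rw [← hsub]
    exact Nat.cast_ne_zero.mpr (by omega)
  have htwo_ne : (n : K) + 2 ≠ 0 := by exact_mod_cast (n + 1).succ_ne_zero
  field_simp
  linear_combination ((n : K) + 2) * h1 + ((k : K) + 1) * h2

theorem sum_support_dim_qubit_general (N : ℕ) :
    ∑ l ∈ Finset.range ((N + 1) / 2),
        ((N : ℚ) + 1) * (N.choose l) * ((N : ℚ) - 2 * l) ^ 2 /
          (((N : ℚ) + 1 - l) * ((l : ℚ) + 1))
      = 2 ^ (N + 1) - (N : ℚ) - 2 := by
  have hhalf : ((N + 2 : ℕ) : ℚ) * 2 ^ (N + 2) = 2 • ∑ k ∈ range ((N + 1) / 2 + 1),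
      ((N + 2).choose k : ℚ) * (((N + 2 : ℕ) : ℚ) - 2 * k) ^ 2 := by
    rw [← sum_range_choose_mul_sub_two_mul_sq, show (N + 1) / 2 + 1 = (N + 2 + 1) / 2 by omega]
    refine sum_range_succ_eq_two_nsmul_sum_range_half _ _ (fun k hk => ?_) (fun k hk => ?_)
    · rw [Nat.choose_symm hk, Nat.cast_sub hk]
      ring
    · rw [← hk]
      push_cast
      ring
  rw [sum_range_succ', two_nsmul] at hhalf
  calc _ = ∑ l ∈ range ((N + 1) / 2), ((N + 2).choose (l + 1) : ℚ) *
        (((N + 2 : ℕ) : ℚ) - 2 * (l + 1 : ℕ)) ^ 2 / ((N : ℚ) + 2) := by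
        refine sum_congr rfl fun l hl => ?_
        rw [mul_div_right_comm, add_one_mul_choose_div_eq_choose_add_two_div (by grind)]
        push_cast
        ring
    _ = 2 ^ (N + 1) - (N : ℚ) - 2 := by
        rw [← sum_div]
        field_simp
        push_cast [Nat.choose_zero_right] at hhalf ⊢
        linear_combination -hhalf / 2

/-- For every `N ≥ 1`,
`Σ_{l=0}^{⌈N/2⌉−1} (N+1)·C(N,l)·(N−2l)² / ((N+1−l)(l+1)) = 2^{N+1} − N − 2`
as rational numbers. Here `⌈N/2⌉ = (N+1)/2` (natural division), so the sum
runs over `l ∈ Finset.range ((N+1)/2)`. -/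
theorem sum_support_dim_qubit (N : ℕ) (hN : 1 ≤ N) :
    ∑ l ∈ Finset.range ((N + 1) / 2),
        ((N : ℚ) + 1) * (N.choose l) * ((N : ℚ) - 2 * l) ^ 2 /
          (((N : ℚ) + 1 - l) * ((l : ℚ) + 1))
      = 2 ^ (N + 1) - (N : ℚ) - 2 :=
  sum_support_dim_qubit_general N
end

section
/- For every integer N ≥ 1, the integer identity Σ_{l=0}^{N} (N−2l)²·C(N+2, l+1) = (N+2)·(2^{N+2} − 2N − 4) holds, where C(N+2,l+1) denotes the binomial coefficient. -/
/-!
Let `S n = ∑ₖ (n - 2k)² C(n, k)`. With `j = n - k` the weight is `(j - k)²`; Pascal's rule splits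
the sum at `n + 1` into two sums at `n` in which `j - k` is shifted by `+1` and by `-1`, and
`(d + 1)² + (d - 1)² = 2d² + 2` gives `S (n + 1) = 2 S n + 2 ^ (n + 1)`, hence `S n = n 2ⁿ`.
The sum of the theorem is `S (N + 2)` without its end terms `k = 0` and `k = N + 2`, each
equal to `(N + 2)²`.
-/

open Finset

theorem sum_antidiagonal_choose_mul_sq_sub (n : ℕ) :
    ∑ ij ∈ antidiagonal n, (n.choose ij.1 : ℤ) * ((ij.2 : ℤ) - ij.1) ^ 2 = n * 2 ^ n := by
  induction n with
  | zero => simp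
  | succ n ih =>
    have hsymm : ∀ ij ∈ antidiagonal n, n.choose ij.2 = n.choose ij.1 := fun ij hij =>
      (Nat.choose_symm_of_eq_add (mem_antidiagonal.mp hij).symm).symm
    have hcard : ∑ ij ∈ antidiagonal n, (n.choose ij.1 : ℤ) = 2 ^ n := by
      rw [Nat.sum_antidiagonal_eq_sum_range_succ_mk]
      exact_mod_cast Nat.sum_range_choose n
    rw [sum_antidiagonal_choose_succ_mul fun i j => ((j : ℤ) - i) ^ 2, ← sum_add_distrib]
    calc _ = ∑ ij ∈ antidiagonal n, (2 * ((n.choose ij.1 : ℤ) * ((ij.2 : ℤ) - ij.1) ^ 2)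
            + 2 * (n.choose ij.1 : ℤ)) :=
          sum_congr rfl fun ij hij => by rw [hsymm ij hij]; push_cast; ring
      _ = ((n + 1 : ℕ) : ℤ) * 2 ^ (n + 1) := by
        rw [sum_add_distrib, ← mul_sum, ← mul_sum, ih, hcard]; push_cast; ring

theorem sum_range_sq_sub_two_mul_mul_choose (n : ℕ) :
    ∑ k ∈ range (n + 1), ((n : ℤ) - 2 * k) ^ 2 * (n.choose k : ℤ) = (n : ℤ) * 2 ^ n := by
  rw [← sum_antidiagonal_choose_mul_sq_sub, Nat.sum_antidiagonal_eq_sum_range_succ_mk]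
  refine sum_congr rfl fun k hk => ?_
  rw [Nat.cast_sub (mem_range_succ_iff.mp hk)]
  ring

theorem sum_sq_binom_identity_general (N : ℕ) :
    ∑ l ∈ Finset.range (N + 1),
        ((N : ℤ) - 2 * l) ^ 2 * ((N + 2).choose (l + 1) : ℤ)
      = ((N : ℤ) + 2) * (2 ^ (N + 2) - 2 * N - 4) := by
  have h := sum_range_sq_sub_two_mul_mul_choose (N + 2)
  rw [sum_range_succ', sum_range_succ] at h
  simp only [Nat.choose_self, Nat.choose_zero_right] at h
  push_cast at h
  have e : ∀ l ∈ range (N + 1), ((N : ℤ) + 2 - 2 * (l + 1)) ^ 2 * ((N + 2).choose (l + 1) : ℤ)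
      = ((N : ℤ) - 2 * l) ^ 2 * ((N + 2).choose (l + 1) : ℤ) := fun _ _ => by ring
  rw [sum_congr rfl e] at h
  linear_combination h

/-- For every `N ≥ 1`, the integer identity
`Σ_{l=0}^{N} (N−2l)²·C(N+2, l+1) = (N+2)·(2^{N+2} − 2N − 4)`. -/
theorem sum_sq_binom_identity (N : ℕ) (hN : 1 ≤ N) :
    ∑ l ∈ Finset.range (N + 1),
        ((N : ℤ) - 2 * l) ^ 2 * ((N + 2).choose (l + 1) : ℤ)
      = ((N : ℤ) + 2) * (2 ^ (N + 2) - 2 * N - 4) :=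
  sum_sq_binom_identity_general N
end

section
/- Let d ≥ 2 and N ≥ 1 be integers, and let M_0, M_1, …, M_N be positive semidefinite matrices on H satisfying Σ_{i=0}^{N} M_i = 1_H and, for every 1 ≤ i ≤ N, tr(M_i · (1_H − d^{N−1} σ_i)) = 0. Then (1/d²)·Σ_{i=1}^{N} tr((M_i + (1/N)·M_0)·σ_i) = (1/d^{N+1})·Σ_{i=1}^{N} tr(M_i) + (1/(N·d²))·tr(M_0 · Σ_{j=1}^{N} σ_j). In other words, every probabilistic port-based teleportation scheme with success probability p_succ = d^{−(N+1)} Σ_{i=1}^N tr(M_i) can be turned into a deterministic one with entanglement fidelity F = p_succ + (1/(d²N))·tr(M_0 ρ), where ρ = Σ_j σ_j. -/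
open Finset Matrix
open scoped ComplexOrder

/-- The `i`-th PBT signal state `σ_i` for `N` ports each of dimension `d`:
a matrix on `(ℂ^d)^{⊗N} ⊗ ℂ^d` indexed by pairs `(a, c)`, whose
`((a,c),(a',c'))` entry is `d^{−N}` iff `a_i = c`, `a'_i = c'`, and
`a_j = a'_j` for all `j ≠ i`, and `0` otherwise. -/
noncomputable def sigmaPBT (d N : ℕ) (i : Fin N) :
    Matrix ((Fin N → Fin d) × Fin d) ((Fin N → Fin d) × Fin d) ℂ :=
  fun p q =>
    if p.1 i = p.2 ∧ q.1 i = q.2 ∧ ∀ j, j ≠ i → p.1 j = q.1 j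
    then ((d : ℂ) ^ N)⁻¹ else 0

/-! The fidelity is linear in the POVM, and on a faithful outcome `M_i` the overlap
`tr(M_i σ_i)` is forced to be `d^{-(N-1)} tr(M_i)`; only the failure outcome `M_0`
contributes a genuinely state-dependent term. -/

theorem Matrix.trace_mul_eq_inv_mul_trace_of_trace_mul_one_sub_smul_eq_zero
    {n K : Type*} [Fintype n] [DecidableEq n] [Field K]
    (A S : Matrix n n K) {c : K} (hc : c ≠ 0) (h : (A * (1 - c • S)).trace = 0) :
    (A * S).trace = c⁻¹ * A.trace := by
  rw [Matrix.mul_sub, Matrix.mul_one, Matrix.mul_smul, trace_sub, trace_smul, smul_eq_mul,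
    sub_eq_zero] at h
  rw [h, inv_mul_cancel_left₀ hc]

theorem trace_mul_sigmaPBT_of_faithful {d N : ℕ} (hd : d ≠ 0) (i : Fin N)
    (A : Matrix ((Fin N → Fin d) × Fin d) ((Fin N → Fin d) × Fin d) ℂ)
    (hA : (A * (1 - ((d : ℂ) ^ (N - 1)) • sigmaPBT d N i)).trace = 0) :
    1 / (d : ℂ) ^ 2 * (A * sigmaPBT d N i).trace = 1 / (d : ℂ) ^ (N + 1) * A.trace := by
  have hd0 : (d : ℂ) ≠ 0 := Nat.cast_ne_zero.mpr hd
  rw [trace_mul_eq_inv_mul_trace_of_trace_mul_one_sub_smul_eq_zero A _ (pow_ne_zero _ hd0) hA,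
    ← mul_assoc, one_div, one_div, ← mul_inv, ← pow_add]
  congr 3
  -- `N - 1` is truncated subtraction; the port `i` itself gives `1 ≤ N`.
  have := i.pos
  omega

theorem pPBT_to_dPBT_fidelity_general (d N : ℕ) (hd : 2 ≤ d)
    (M : Fin (N + 1) → Matrix ((Fin N → Fin d) × Fin d) ((Fin N → Fin d) × Fin d) ℂ)
    (hfaithful : ∀ i : Fin N,
      (M i.succ * (1 - ((d : ℂ) ^ (N - 1)) • sigmaPBT d N i)).trace = 0) :
    (1 / (d : ℂ) ^ 2) *
        ∑ i : Fin N, ((M i.succ + (1 / (N : ℂ)) • M 0) * sigmaPBT d N i).trace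
      = (1 / (d : ℂ) ^ (N + 1)) * ∑ i : Fin N, (M i.succ).trace
          + (1 / ((N : ℂ) * (d : ℂ) ^ 2)) *
              (M 0 * ∑ j : Fin N, sigmaPBT d N j).trace := by
  simp only [Matrix.add_mul, Matrix.smul_mul, trace_add, trace_smul, smul_eq_mul,
    sum_add_distrib, trace_sum, mul_add, mul_sum]
  congr 1
  · exact sum_congr rfl fun i _ => trace_mul_sigmaPBT_of_faithful (by omega) i _ (hfaithful i)
  · refine sum_congr rfl fun i _ => ?_
    rw [← mul_assoc, one_div_mul_one_div, mul_comm (N : ℂ)]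

/-- Every probabilistic PBT scheme, given by a POVM `M_0, M_1, …, M_N`
(`M_0` the failure outcome) whose success outcomes teleport faithfully
(`tr(M_i (1 − d^{N−1} σ_i)) = 0` for `1 ≤ i ≤ N`), turns into a deterministic
scheme via `Π_i = M_i + M_0/N` whose entanglement fidelity
`F = (1/d²) Σ_i tr(Π_i σ_i)` equals
`p_succ + (1/(d²N))·tr(M_0 ρ)` with `p_succ = d^{−(N+1)} Σ_i tr(M_i)` and
`ρ = Σ_j σ_j`. -/
theorem pPBT_to_dPBT_fidelity (d N : ℕ) (hd : 2 ≤ d) (hN : 1 ≤ N)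
    (M : Fin (N + 1) → Matrix ((Fin N → Fin d) × Fin d) ((Fin N → Fin d) × Fin d) ℂ)
    (hpsd : ∀ i, (M i).PosSemidef)
    (hsum : ∑ i, M i = 1)
    (hfaithful : ∀ i : Fin N,
      (M i.succ * (1 - ((d : ℂ) ^ (N - 1)) • sigmaPBT d N i)).trace = 0) :
    (1 / (d : ℂ) ^ 2) *
        ∑ i : Fin N, ((M i.succ + (1 / (N : ℂ)) • M 0) * sigmaPBT d N i).trace
      = (1 / (d : ℂ) ^ (N + 1)) * ∑ i : Fin N, (M i.succ).trace
          + (1 / ((N : ℂ) * (d : ℂ) ^ 2)) *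
              (M 0 * ∑ j : Fin N, sigmaPBT d N j).trace :=
  pPBT_to_dPBT_fidelity_general d N hd M hfaithful
end

section
/- Define, for each integer N ≥ 1, S(N) = (2/(N+2))·√(6/((N+1)(N+3)))·Σ_m m·sin(π m/(N+2)), where the sum runs over integers m with 1 ≤ m ≤ N+1 and m ≡ N+1 (mod 2). Then S(N) converges to √6/π as N → ∞. -/
open Finset Filter

/-- The square-root fidelity between the optimal resource states of
probabilistic and deterministic qubit PBT with `N` ports:
`S(N) = (2/(N+2))·√(6/((N+1)(N+3)))·Σ_m m·sin(π m/(N+2))`,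
the sum over integers `1 ≤ m ≤ N+1` with `m ≡ N+1 (mod 2)`. -/
noncomputable def Sfid (N : ℕ) : ℝ :=
  (2 / ((N : ℝ) + 2)) * Real.sqrt (6 / (((N : ℝ) + 1) * ((N : ℝ) + 3))) *
    ∑ m ∈ (Finset.Icc 1 (N + 1)).filter (fun m => m % 2 = (N + 1) % 2),
      (m : ℝ) * Real.sin (Real.pi * m / ((N : ℝ) + 2))

open Real Topology

/-!
The parity-restricted sum telescopes in steps of two: `m ↦ m sin(mθ)` has an explicit
antidifference with step two, and for `θ = π/(N+2)` the boundary terms give the closed form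
`Σ m sin(mθ) = (N+2) / (2 sin θ)`. Hence `S(N) = √6 / (√((N+2)² - 1) · sin(π/(N+2)))`,
and `x sin(π/x) → π` gives the limit.
-/

/-- An antidifference with step two of `m ↦ m sin(mθ)`. -/
noncomputable def mulSinAntidiff (θ m : ℝ) : ℝ :=
  (1 / (2 * sin θ ^ 2) - m / 2) * sin (m * θ) - (m * cos θ / (2 * sin θ)) * cos (m * θ)

section mulSinAntidiff

variable {θ : ℝ}

lemma mulSinAntidiff_add_two_sub (hθ : sin θ ≠ 0) (m : ℝ) :
    mulSinAntidiff θ (m + 2) - mulSinAntidiff θ m = m * sin (m * θ) := by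
  have h : (m + 2) * θ = m * θ + 2 * θ := by ring
  rw [mulSinAntidiff, mulSinAntidiff, h, sin_add, cos_add, sin_two_mul, cos_two_mul]
  field_simp
  linear_combination (2 * sin (m * θ) - 2 * (m + 2) * sin θ * cos θ * cos (m * θ)) *
    sin_sq_add_cos_sq θ

lemma mulSinAntidiff_one (hθ : sin θ ≠ 0) : mulSinAntidiff θ 1 = 0 := by
  rw [mulSinAntidiff, one_mul]
  field_simp
  linear_combination -sin_sq_add_cos_sq θ

lemma mulSinAntidiff_two (hθ : sin θ ≠ 0) : mulSinAntidiff θ 2 = 0 := by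
  rw [mulSinAntidiff, sin_two_mul, cos_two_mul]
  field_simp
  linear_combination (-2 * cos θ) * sin_sq_add_cos_sq θ

lemma mulSinAntidiff_add_one_of_mul_eq_pi (hθ : sin θ ≠ 0) {n : ℝ} (hn : n * θ = π) :
    mulSinAntidiff θ (n + 1) = n / (2 * sin θ) := by
  have h : (n + 1) * θ = π + θ := by rw [← hn]; ring
  rw [mulSinAntidiff, h, sin_add, cos_add, sin_pi, cos_pi]
  field_simp
  linear_combination (sin θ * (n + 1)) * sin_sq_add_cos_sq θ

lemma sum_range_mul_sin_eq_mulSinAntidiff_sub (hθ : sin θ ≠ 0) (c K : ℕ) :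
    ∑ k ∈ range K, ((c + 2 * k : ℕ) : ℝ) * sin ((c + 2 * k : ℕ) * θ)
      = mulSinAntidiff θ (c + 2 * K : ℕ) - mulSinAntidiff θ c := by
  have h := sum_range_sub (fun k ↦ mulSinAntidiff θ (c + 2 * k : ℕ)) K
  rw [Nat.mul_zero, Nat.add_zero] at h
  rw [← h]
  refine sum_congr rfl fun k _ ↦ ?_
  rw [← mulSinAntidiff_add_two_sub hθ]
  congr 2
  push_cast
  ring

end mulSinAntidiff

lemma sin_pi_div_pos {x : ℝ} (hx : 1 < x) : 0 < sin (π / x) :=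
  sin_pos_of_pos_of_lt_pi (by positivity) (div_lt_self pi_pos hx)

lemma filter_Icc_mod_two_eq_image (N : ℕ) :
    (Icc 1 (N + 1)).filter (fun m ↦ m % 2 = (N + 1) % 2)
      = (range ((N + 2) / 2)).image (fun k ↦ 1 + N % 2 + 2 * k) := by
  ext m
  simp only [mem_filter, mem_Icc, mem_image, mem_range]
  constructor
  · rintro ⟨hm, hpar⟩
    exact ⟨(m - (1 + N % 2)) / 2, by omega, by omega⟩
  · rintro ⟨k, hk, rfl⟩
    omega

lemma sum_filter_mod_two_mul_sin_eq (N : ℕ) :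
    ∑ m ∈ (Icc 1 (N + 1)).filter (fun m ↦ m % 2 = (N + 1) % 2),
        (m : ℝ) * sin (π * m / ((N : ℝ) + 2))
      = ((N : ℝ) + 2) / (2 * sin (π / ((N : ℝ) + 2))) := by
  have hNθ : ((N : ℝ) + 2) * (π / ((N : ℝ) + 2)) = π := by field_simp
  set θ := π / ((N : ℝ) + 2)
  have hθ : sin θ ≠ 0 := (sin_pi_div_pos (by linarith [N.cast_nonneg' (α := ℝ)])).ne'
  rw [filter_Icc_mod_two_eq_image, sum_image fun a _ b _ h ↦ by omega]
  have hsummand (k : ℕ) : π * (1 + N % 2 + 2 * k : ℕ) / ((N : ℝ) + 2)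
      = (1 + N % 2 + 2 * k : ℕ) * θ := by ring
  simp only [hsummand]
  rw [sum_range_mul_sin_eq_mulSinAntidiff_sub hθ]
  have hend : ((1 + N % 2 + 2 * ((N + 2) / 2) : ℕ) : ℝ) = (N + 2 : ℝ) + 1 := by
    rw [show 1 + N % 2 + 2 * ((N + 2) / 2) = N + 3 by omega]
    push_cast
    ring
  have hstart : mulSinAntidiff θ (1 + N % 2 : ℕ) = 0 := by
    rcases Nat.mod_two_eq_zero_or_one N with h | h <;> rw [h] <;> norm_num
    exacts [mulSinAntidiff_one hθ, mulSinAntidiff_two hθ]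
  rw [hend, mulSinAntidiff_add_one_of_mul_eq_pi hθ hNθ, hstart, sub_zero]

lemma Sfid_eq (N : ℕ) :
    Sfid N = √6 / (√(((N : ℝ) + 2) ^ 2 - 1) * sin (π / ((N : ℝ) + 2))) := by
  have hN : (0 : ℝ) < (N : ℝ) + 2 := by positivity
  have hsin := sin_pi_div_pos (show 1 < (N : ℝ) + 2 by linarith)
  have hsq : ((N : ℝ) + 2) ^ 2 - 1 = ((N : ℝ) + 1) * ((N : ℝ) + 3) := by ring
  rw [Sfid, sum_filter_mod_two_mul_sin_eq, hsq, sqrt_div' _ (by positivity)]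
  field_simp

lemma tendsto_mul_sin_div_atTop (a : ℝ) :
    Tendsto (fun x : ℝ ↦ x * sin (a / x)) atTop (𝓝 a) := by
  have h : Tendsto (fun x : ℝ ↦ a * sinc (a / x)) atTop (𝓝 (a * sinc 0)) :=
    ((continuous_sinc.tendsto 0).comp (tendsto_const_nhds.div_atTop tendsto_id)).const_mul a
  rw [sinc_zero, mul_one] at h
  refine h.congr' ?_
  filter_upwards [eventually_gt_atTop 0] with x hx
  rcases eq_or_ne a 0 with rfl | ha
  · simp
  · rw [sinc_of_ne_zero (by positivity)]
    field_simp

lemma tendsto_sqrt_sq_sub_one_mul_sin_div_atTop (a : ℝ) :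
    Tendsto (fun x : ℝ ↦ √(x ^ 2 - 1) * sin (a / x)) atTop (𝓝 a) := by
  have hroot : Tendsto (fun x : ℝ ↦ √(1 - (x⁻¹) ^ 2)) atTop (𝓝 1) := by
    simpa [Function.comp_def] using ((continuous_sqrt.tendsto _).comp
      ((tendsto_inv_atTop_zero.pow 2).const_sub 1))
  have h := hroot.mul (tendsto_mul_sin_div_atTop a)
  rw [one_mul] at h
  refine h.congr' ?_
  filter_upwards [eventually_gt_atTop 0] with x hx
  have hsq : x ^ 2 - 1 = (1 - x⁻¹ ^ 2) * x ^ 2 := by field_simp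
  rw [hsq, sqrt_mul' _ (sq_nonneg x), sqrt_sq hx.le, mul_assoc]

/-- `S(N)` converges to `√6/π` as `N → ∞`. -/
theorem Sfid_tendsto : Tendsto Sfid atTop (nhds (Real.sqrt 6 / Real.pi)) := by
  have hshift : Tendsto (fun N : ℕ ↦ (N : ℝ) + 2) atTop atTop :=
    tendsto_atTop_add_const_right _ 2 tendsto_natCast_atTop_atTop
  have hden := (tendsto_sqrt_sq_sub_one_mul_sin_div_atTop π).comp hshift
  exact ((tendsto_const_nhds (x := √6)).div hden pi_ne_zero).congr fun N ↦ (Sfid_eq N).symm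
end
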